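/- For the separable state ρ_mix = (|01⟩⟨01| + |10⟩⟨10|)/2 and rotationally covariant POVM densities M_φ^{r_A}, M_ψ^{r_B} as above, the joint density tr[ρ_mix (M_φ^{r_A} ⊗ M_ψ^{r_B})] = 1/π² is constant, independent of φ, ψ, r_A, r_B; in particular the relative-angle distribution is uniform. -/

import Mathlib

/-!
The state is diagonal in the product basis, so the trace only sees the diagonal entries
`M_φ^{r_A} i i * M_ψ^{r_B} j j`. Every one of them is `1/π`: `U φ` is a diagonal unitary, so
conjugating by it leaves diagonal entries unchanged, and `𝟙 + r σ_x` has unit diagonal.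
-/

open Matrix Complex
open scoped Matrix Kronecker Real ComplexOrder

noncomputable section

/-- The Pauli matrix `σ_x`. -/
def σx : Matrix (Fin 2) (Fin 2) ℂ := !![0, 1; 1, 0]
/-- The Pauli matrix `σ_y`. -/
def σy : Matrix (Fin 2) (Fin 2) ℂ := !![0, -Complex.I; Complex.I, 0]
/-- The Pauli matrix `σ_z`. -/
def σz : Matrix (Fin 2) (Fin 2) ℂ := !![1, 0; 0, -1]

/-- `U φ = exp(-i φ σ_z)`, the unitary rotation about the z-axis. -/
def U (φ : ℝ) : Matrix (Fin 2) (Fin 2) ℂ :=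
  NormedSpace.exp ((-(Complex.I * (φ : ℂ))) • σz)

/-- The rotationally covariant POVM density `M_φ^r = (1/π) U_φ* (𝟙 + r σ_x) U_φ`. -/
def Mpovm (r φ : ℝ) : Matrix (Fin 2) (Fin 2) ℂ :=
  ((π : ℂ))⁻¹ • ((U φ)ᴴ * ((1 : Matrix (Fin 2) (Fin 2) ℂ) + (r : ℂ) • σx) * U φ)

/-- A density matrix: positive semidefinite with unit trace. -/
def IsDensity {n : Type*} [Fintype n] [DecidableEq n] (ρ : Matrix n n ℂ) : Prop :=
  ρ.PosSemidef ∧ ρ.trace = 1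

/-- The singlet vector `|Ψ⁻⟩ = (|01⟩ - |10⟩)/√2`. -/
def ψminus : Fin 2 × Fin 2 → ℂ := fun p =>
  if p = (0, 1) then (Real.sqrt 2)⁻¹ else if p = (1, 0) then -(Real.sqrt 2)⁻¹ else 0

/-- The projector `|Ψ⁻⟩⟨Ψ⁻|`. -/
def singletProj : Matrix (Fin 2 × Fin 2) (Fin 2 × Fin 2) ℂ :=
  Matrix.vecMulVec ψminus (fun j => (starRingEnd ℂ) (ψminus j))

/-- The Werner state `W_f = f |Ψ⁻⟩⟨Ψ⁻| + ((1-f)/4) 𝟙₄`. -/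
def Werner (f : ℝ) : Matrix (Fin 2 × Fin 2) (Fin 2 × Fin 2) ℂ :=
  (f : ℂ) • singletProj + (((1 - f) / 4 : ℝ) : ℂ) • (1 : Matrix (Fin 2 × Fin 2) (Fin 2 × Fin 2) ℂ)

theorem Matrix.diagonal_conjTranspose_mul_mul_diagonal_apply {n R : Type*} [Fintype n]
    [DecidableEq n] [CommSemiring R] [StarRing R] (d : n → R) (A : Matrix n n R) (i j : n) :
    ((diagonal d)ᴴ * A * diagonal d) i j = star (d i) * A i j * d j := by
  rw [diagonal_conjTranspose, mul_diagonal, diagonal_mul, Pi.star_apply]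

theorem U_eq_diagonal (φ : ℝ) :
    U φ = diagonal ![Complex.exp (-(Complex.I * φ)), Complex.exp (Complex.I * φ)] := by
  have h : (-(Complex.I * (φ : ℂ))) • σz = diagonal ![-(Complex.I * φ), Complex.I * φ] := by
    ext i j; fin_cases i <;> fin_cases j <;> simp [σz]
  rw [U, h, exp_diagonal, Pi.exp_def]
  congr; ext i; fin_cases i <;> simp [Complex.exp_eq_exp_ℂ]

theorem Mpovm_apply_self (r φ : ℝ) (i : Fin 2) : Mpovm r φ i i = (π : ℂ)⁻¹ := by
  have hσx : ((1 : Matrix (Fin 2) (Fin 2) ℂ) + (r : ℂ) • σx) i i = 1 := by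
    fin_cases i <;> simp [σx]
  have hU : ∀ θ : ℝ, star (Complex.exp (Complex.I * θ)) * Complex.exp (Complex.I * θ) = 1 := by
    intro θ
    rw [Complex.star_def, ← Complex.exp_conj, ← Complex.exp_add]
    simp
  rw [Mpovm, Matrix.smul_apply, U_eq_diagonal, diagonal_conjTranspose_mul_mul_diagonal_apply, hσx,
    mul_one, smul_eq_mul]
  fin_cases i
  · simpa using hU (-φ)
  · simpa using hU φ

/-- for the separable mixture `ρ_mix = (|01⟩⟨01| + |10⟩⟨10|)/2`, the joint
density is uniform: `tr[ρ_mix (M_φ^{r_A} ⊗ M_ψ^{r_B})] = 1/π²` for all `φ, ψ, r_A, r_B`. -/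
theorem separable_mixture_uniform_density (rA rB φ ψ : ℝ) :
    ((((2 : ℂ))⁻¹ • (Matrix.single ((0 : Fin 2), (1 : Fin 2)) ((0 : Fin 2), (1 : Fin 2)) (1 : ℂ)
          + Matrix.single ((1 : Fin 2), (0 : Fin 2)) ((1 : Fin 2), (0 : Fin 2)) (1 : ℂ)))
        * (Mpovm rA φ ⊗ₖ Mpovm rB ψ)).trace
      = (((π : ℝ) ^ 2)⁻¹ : ℝ) := by
  rw [smul_mul, add_mul, trace_smul, trace_add, trace_single_mul, trace_single_mul]
  simp only [kroneckerMap_apply, Mpovm_apply_self, smul_eq_mul]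
  push_cast
  ring
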